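/- Let Σ be a real symmetric positive definite n×n matrix and 1 ≤ r ≤ n. Consider the primal problem P: minimize ‖Σ − Ω‖_F² over real n×n matrices Ω with rank(Ω) ≤ r, Ω positive semidefinite, Σ − Ω positive semidefinite, and Σ − Ω diagonal; and the dual problem D: maximize −‖Σ + Λ‖_r² + 2⟨Λ, Σ⟩ + ‖Σ‖_F² over Λ ∈ S_0^n. Suppose the optimal value of P equals the optimal value of D, that Ω⋆ attains the minimum in P, and that Λ⋆ attains the maximum in D. Then Ω⋆ is a best rank-at-most-r Frobenius approximation of Σ + Λ⋆: for every real n×n matrix B with rank(B) ≤ r, ‖(Σ + Λ⋆) − Ω⋆‖_F ≤ ‖(Σ + Λ⋆) − B‖_F. -/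

import Mathlib

open Matrix

/-- The `k`-th largest singular value (1-indexed) of a real square matrix,
with junk value `0` when `k` is out of range. -/
noncomputable def sv {n : ℕ} (A : Matrix (Fin n) (Fin n) ℝ) (k : ℕ) : ℝ :=
  if h : k - 1 < n then
    (fun i => Real.sqrt ((Matrix.isHermitian_conjTranspose_mul_self A).eigenvalues i))
      (Tuple.sort (fun i : Fin n =>
        Real.sqrt ((Matrix.isHermitian_conjTranspose_mul_self A).eigenvalues i))
        (Fin.rev ⟨k - 1, h⟩))
  else 0

/-- Operator (spectral) norm: the largest singular value. -/
noncomputable def opNorm {n : ℕ} (A : Matrix (Fin n) (Fin n) ℝ) : ℝ := sv A 1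

/-- Frobenius norm. -/
noncomputable def frobNorm {n : ℕ} (A : Matrix (Fin n) (Fin n) ℝ) : ℝ :=
  Real.sqrt (∑ i, ∑ j, (A i j) ^ 2)

/-- The `r`-norm: square root of the sum of squares of the `r` largest singular values. -/
noncomputable def rNorm {n : ℕ} (A : Matrix (Fin n) (Fin n) ℝ) (r : ℕ) : ℝ :=
  Real.sqrt (∑ k ∈ Finset.range r, (sv A (k + 1)) ^ 2)

/-- Frobenius (trace) inner product of square matrices. -/
noncomputable def minner {n : ℕ} (A B : Matrix (Fin n) (Fin n) ℝ) : ℝ :=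
  (Aᵀ * B).trace

/-- The ranges (column spaces) of `A` and `B` are orthogonal. -/
def rangesOrth {n : ℕ} (A B : Matrix (Fin n) (Fin n) ℝ) : Prop :=
  ∀ x y : Fin n → ℝ, (A.mulVec x) ⬝ᵥ (B.mulVec y) = 0

open Finset

/-!
Since `Sg - Ωs` is diagonal and `Λs` vanishes on the diagonal, the two are orthogonal for the
trace inner product, so `‖Sg + Λs - Ωs‖² = ‖Sg - Ωs‖² + ‖Λs‖²`; expanding `‖Sg + Λs‖²` turns the
zero-gap equation into `‖Sg + Λs - Ωs‖² = ‖Sg + Λs‖² - ‖Sg + Λs‖_r²`.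

The right-hand side is the Eckart–Young lower bound `‖M‖² - ‖M‖_r² ≤ ‖M - B‖²` for `rank B ≤ r`.
Take an orthonormal family `V` of `n - r` vectors in `ker B`. Then
`‖M - B‖² ≥ ‖(M - B) V‖² = ‖M V‖² = ∑ λᵢ cᵢ`, where `λ` are the eigenvalues of `MᵀM` and
`cᵢ ∈ [0, 1]` are the diagonal entries of a projection of rank `n - r`, so `∑ cᵢ = n - r`.
Such a weighted sum is at least the sum of the `n - r` smallest eigenvalues, which is
`‖M‖² - ‖M‖_r²`.
-/

section Frobenius

variable {n : ℕ}

lemma frobNorm_nonneg (A : Matrix (Fin n) (Fin n) ℝ) : 0 ≤ frobNorm A := Real.sqrt_nonneg _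

lemma frobNorm_sq (A : Matrix (Fin n) (Fin n) ℝ) : frobNorm A ^ 2 = ∑ i, ∑ j, A i j ^ 2 :=
  Real.sq_sqrt (by positivity)

lemma frobNorm_sq_eq_trace (A : Matrix (Fin n) (Fin n) ℝ) :
    frobNorm A ^ 2 = (Aᵀ * A).trace := by
  rw [frobNorm_sq, trace, Finset.sum_comm]
  simp [mul_apply, sq]

lemma minner_eq_sum (A B : Matrix (Fin n) (Fin n) ℝ) :
    minner A B = ∑ i, ∑ j, A i j * B i j := by
  rw [minner, trace, Finset.sum_comm]
  simp [mul_apply]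

lemma minner_comm (A B : Matrix (Fin n) (Fin n) ℝ) : minner A B = minner B A := by
  simp only [minner_eq_sum, mul_comm]

lemma frobNorm_add_sq (A B : Matrix (Fin n) (Fin n) ℝ) :
    frobNorm (A + B) ^ 2 = frobNorm A ^ 2 + 2 * minner A B + frobNorm B ^ 2 := by
  simp only [frobNorm_sq, minner_eq_sum, Matrix.add_apply, Finset.mul_sum,
    ← Finset.sum_add_distrib]
  congr! 2 with i _ j _
  ring

lemma minner_eq_zero_of_isDiag {A B : Matrix (Fin n) (Fin n) ℝ} (hA : A.IsDiag)
    (hB : ∀ i, B i i = 0) : minner A B = 0 := by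
  rw [minner_eq_sum]
  refine Finset.sum_eq_zero fun i _ => Finset.sum_eq_zero fun j _ => ?_
  rcases eq_or_ne i j with rfl | hij
  · rw [hB, mul_zero]
  · rw [hA hij, zero_mul]

end Frobenius

section Isometry

variable {ι κ ρ : Type*} [Fintype ι] [Fintype κ] {V : Matrix ι κ ℝ}

lemma posSemidef_one_sub_mul_transpose [DecidableEq ι] [DecidableEq κ] (hV : Vᵀ * V = 1) :
    (1 - V * Vᵀ).PosSemidef := by
  have hidem : V * Vᵀ * (V * Vᵀ) = V * Vᵀ := by
    rw [Matrix.mul_assoc, ← Matrix.mul_assoc Vᵀ, hV, Matrix.one_mul]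
  have hsq : (1 - V * Vᵀ)ᴴ * (1 - V * Vᵀ) = 1 - V * Vᵀ := by
    rw [conjTranspose_eq_transpose_of_trivial, transpose_sub, transpose_one, transpose_mul,
      transpose_transpose, sub_mul, mul_sub, mul_sub, hidem]
    simp only [Matrix.one_mul, Matrix.mul_one]
    abel
  exact hsq ▸ posSemidef_conjTranspose_mul_self (1 - V * Vᵀ)

lemma diag_mul_transpose_nonneg (V : Matrix ι κ ℝ) (i : ι) : 0 ≤ (V * Vᵀ) i i := by
  simpa using (posSemidef_self_mul_conjTranspose V).diag_nonneg (i := i)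

lemma diag_mul_transpose_le_one [DecidableEq ι] [DecidableEq κ] (hV : Vᵀ * V = 1) (i : ι) :
    (V * Vᵀ) i i ≤ 1 := by
  have := (posSemidef_one_sub_mul_transpose hV).diag_nonneg (i := i)
  simpa [Matrix.sub_apply] using this

lemma trace_mul_transpose [DecidableEq κ] (hV : Vᵀ * V = 1) :
    (V * Vᵀ).trace = Fintype.card κ := by
  rw [trace_mul_comm, hV, trace_one]

lemma trace_transpose_mul_self_mul_le [Fintype ρ] [DecidableEq ι] [DecidableEq κ]
    (hV : Vᵀ * V = 1) (A : Matrix ρ ι ℝ) : ((A * V)ᵀ * (A * V)).trace ≤ (Aᵀ * A).trace := by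
  have hcompl := ((posSemidef_one_sub_mul_transpose hV).mul_mul_conjTranspose_same A).trace_nonneg
  rw [conjTranspose_eq_transpose_of_trivial, Matrix.mul_sub, Matrix.sub_mul, trace_sub,
    Matrix.mul_one, trace_mul_comm A, trace_mul_comm (A * (V * Vᵀ))] at hcompl
  rw [transpose_mul, Matrix.mul_assoc, trace_mul_comm Vᵀ]
  simp only [Matrix.mul_assoc] at hcompl ⊢
  linarith

lemma trace_transpose_mul_diagonal_mul (W : Matrix ι κ ℝ) (d : ι → ℝ) [DecidableEq ι] :
    (Wᵀ * diagonal d * W).trace = ∑ i, d i * (W * Wᵀ) i i := by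
  rw [Matrix.mul_assoc, trace_mul_comm, Matrix.mul_assoc, trace]
  simp [diagonal_mul]

end Isometry

lemma exists_transpose_mul_eq_one_and_mul_eq_zero {ι κ : Type*} [Fintype ι] [Fintype κ]
    [DecidableEq ι] (B : Matrix κ ι ℝ) {m : ℕ} (hm : m + B.rank ≤ Fintype.card ι) :
    ∃ V : Matrix ι (Fin m) ℝ, Vᵀ * V = 1 ∧ B * V = 0 := by
  have hrange : Module.finrank ℝ (LinearMap.range (toEuclideanLin B)) = B.rank := by
    have e : toEuclideanLin B = (WithLp.linearEquiv 2 ℝ (κ → ℝ)).symm.toLinearMap ∘ₗ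
        B.mulVecLin ∘ₗ (WithLp.linearEquiv 2 ℝ (ι → ℝ)).toLinearMap := rfl
    rw [Matrix.rank, e, LinearMap.range_comp,
      LinearMap.range_comp_of_range_eq_top _ (LinearEquiv.range _), LinearEquiv.finrank_map_eq]
  have hker : m ≤ Module.finrank ℝ (LinearMap.ker (toEuclideanLin B)) := by
    have := LinearMap.finrank_range_add_finrank_ker (toEuclideanLin B)
    rw [hrange, finrank_euclideanSpace] at this
    omega
  let b := stdOrthonormalBasis ℝ (LinearMap.ker (toEuclideanLin B))
  let v : Fin m → EuclideanSpace ℝ ι := fun j => b (Fin.castLE hker j)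
  refine ⟨of fun i j => v j i, ?_, ?_⟩
  · ext j j'
    have := orthonormal_iff_ite.mp (b.orthonormal.comp _ (Fin.castLE_injective hker)) j j'
    simp only [Function.comp_apply, Submodule.coe_inner] at this
    rw [mul_apply, one_apply, ← this, PiLp.inner_apply]
    simp only [transpose_apply, of_apply, RCLike.inner_apply, Real.ringHom_apply, v]
    exact Finset.sum_congr rfl fun _ _ => mul_comm _ _
  · ext k j
    show toEuclideanLin B (v j) k = 0
    simp [v]

lemma sum_le_sum_mul_of_threshold {ι : Type*} [Fintype ι] (s : Finset ι) (f c : ι → ℝ) (t : ℝ)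
    (hs : ∀ i ∈ s, f i ≤ t) (hsc : ∀ i ∉ s, t ≤ f i) (hc0 : ∀ i ∉ s, 0 ≤ c i)
    (hc1 : ∀ i ∈ s, c i ≤ 1) (hc : ∑ i, c i = #s) :
    ∑ i ∈ s, f i ≤ ∑ i, f i * c i := by
  classical
  -- every summand is `≥ 0`, and the sum is the difference of the two sides
  have key : 0 ≤ ∑ i, (f i - t) * (c i - if i ∈ s then 1 else 0) := by
    refine Finset.sum_nonneg fun i _ => ?_
    by_cases hi : i ∈ s
    · simp only [hi, if_true]; nlinarith [hs i hi, hc1 i hi]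
    · simp only [hi, if_false, sub_zero]; nlinarith [hsc i hi, hc0 i hi]
  have expand : ∑ i, (f i - t) * (c i - if i ∈ s then 1 else 0) =
      ∑ i, f i * c i - ∑ i ∈ s, f i - t * (∑ i, c i - #s) := by
    simp only [sub_mul, mul_sub, mul_ite, mul_one, mul_zero, Finset.sum_sub_distrib,
      Finset.sum_ite_mem, Finset.univ_inter, Finset.mul_sum, Finset.sum_const, nsmul_eq_mul]
    ring
  rw [expand, hc, sub_self, mul_zero, sub_zero] at key
  linarith

lemma card_filter_le_val (n r : ℕ) : #{k : Fin n | r ≤ k.val} = n - r := by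
  have hlt := Fin.card_filter_val_lt (n := n) (m := r)
  have hsplit := card_filter_add_card_filter_not (s := univ) (fun k : Fin n => k.val < r)
  simp only [not_lt, card_univ, Fintype.card_fin] at hsplit
  omega

lemma sum_le_sum_mul_of_antitone {n r : ℕ} {f c : Fin n → ℝ} (hf : Antitone f)
    (hc0 : ∀ k, 0 ≤ c k) (hc1 : ∀ k, c k ≤ 1) (hc : ∑ k, c k = (n - r : ℕ)) :
    ∑ k : Fin n with r ≤ k.val, f k ≤ ∑ k, f k * c k := by
  rcases Nat.eq_zero_or_pos n with rfl | hn
  · simp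
  -- with truncated subtraction this index splits `{k | k < r}` from the rest also for `r = 0`
  -- and for `n < r`
  refine sum_le_sum_mul_of_threshold _ f c (f ⟨min (r - 1) (n - 1), by omega⟩)
    (fun k hk => hf ?_) (fun k hk => hf ?_) (fun k _ => hc0 k) (fun k _ => hc1 k)
    (by rw [hc, card_filter_le_val])
  · simp only [mem_filter, mem_univ, true_and] at hk
    rw [Fin.le_def]
    dsimp only
    omega
  · simp only [mem_filter, mem_univ, true_and, not_le] at hk
    rw [Fin.le_def]
    dsimp only
    omega

section SingularValues

variable {n : ℕ}

noncomputable abbrev gramEigenvalues (A : Matrix (Fin n) (Fin n) ℝ) : Fin n → ℝ :=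
  (isHermitian_conjTranspose_mul_self A).eigenvalues

-- `Tuple.sort` sorts increasingly, `sv` reads the sorted list backwards.
noncomputable def svPerm (A : Matrix (Fin n) (Fin n) ℝ) : Equiv.Perm (Fin n) :=
  Fin.revPerm.trans (Tuple.sort fun i => √(gramEigenvalues A i))

lemma gramEigenvalues_nonneg (A : Matrix (Fin n) (Fin n) ℝ) (i : Fin n) :
    0 ≤ gramEigenvalues A i :=
  (posSemidef_conjTranspose_mul_self A).eigenvalues_nonneg i

lemma sv_succ_sq (A : Matrix (Fin n) (Fin n) ℝ) (k : Fin n) :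
    sv A (k + 1) ^ 2 = gramEigenvalues A (svPerm A k) := by
  rw [sv, dif_pos (by omega)]
  exact Real.sq_sqrt (gramEigenvalues_nonneg A _)

lemma sv_succ_eq_zero (A : Matrix (Fin n) (Fin n) ℝ) {k : ℕ} (hk : n ≤ k) :
    sv A (k + 1) = 0 := by
  rw [sv, dif_neg (by omega)]

lemma antitone_gramEigenvalues_comp_svPerm (A : Matrix (Fin n) (Fin n) ℝ) :
    Antitone (gramEigenvalues A ∘ svPerm A) := fun a b hab => by
  have := Tuple.monotone_sort (fun i => √(gramEigenvalues A i)) (Fin.rev_le_rev.mpr hab)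
  exact (Real.sqrt_le_sqrt_iff (gramEigenvalues_nonneg A _)).mp this

lemma rNorm_sq (A : Matrix (Fin n) (Fin n) ℝ) (r : ℕ) :
    rNorm A r ^ 2 = ∑ k : Fin n with k.val < r, gramEigenvalues A (svPerm A k) := by
  rw [rNorm, Real.sq_sqrt (by positivity), Finset.sum_filter]
  simp_rw [← sv_succ_sq]
  rw [Fin.sum_univ_eq_sum_range (fun k => if k < r then sv A (k + 1) ^ 2 else 0),
    ← Finset.sum_filter]
  refine (Finset.sum_subset (fun k => ?_) fun k hk hkn => ?_).symm
  · simp only [mem_filter, mem_range]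
    omega
  · simp only [mem_range, mem_filter, not_and, not_lt] at hk hkn
    rw [sv_succ_eq_zero A (by omega), zero_pow two_ne_zero]

lemma frobNorm_sq_eq_sum_gramEigenvalues (A : Matrix (Fin n) (Fin n) ℝ) :
    frobNorm A ^ 2 = ∑ i, gramEigenvalues A i := by
  rw [frobNorm_sq_eq_trace, ← conjTranspose_eq_transpose_of_trivial,
    (isHermitian_conjTranspose_mul_self A).trace_eq_sum_eigenvalues]
  rfl

lemma exists_trace_gram_mul_eq {κ : Type*} [Fintype κ] (A : Matrix (Fin n) (Fin n) ℝ)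
    (V : Matrix (Fin n) κ ℝ) : ∃ W : Matrix (Fin n) κ ℝ, Wᵀ * W = Vᵀ * V ∧
      ((A * V)ᵀ * (A * V)).trace = ∑ i, gramEigenvalues A i * (W * Wᵀ) i i := by
  have hA := isHermitian_conjTranspose_mul_self A
  set U : Matrix (Fin n) (Fin n) ℝ := ↑hA.eigenvectorUnitary
  have hUU : U * Uᵀ = 1 := by
    simpa [U, star_eq_conjTranspose] using Unitary.coe_mul_star_self hA.eigenvectorUnitary
  have hspec : Aᵀ * A = U * diagonal (gramEigenvalues A) * Uᵀ := by
    simpa [U, Unitary.conjStarAlgAut_apply, star_eq_conjTranspose] using hA.spectral_theorem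
  refine ⟨Uᵀ * V, ?_, ?_⟩
  · rw [transpose_mul, transpose_transpose, Matrix.mul_assoc, ← Matrix.mul_assoc U, hUU,
      Matrix.one_mul]
  · rw [← trace_transpose_mul_diagonal_mul, transpose_mul, transpose_mul, transpose_transpose,
      Matrix.mul_assoc, ← Matrix.mul_assoc Aᵀ, hspec]
    simp only [Matrix.mul_assoc]

end SingularValues

theorem frobNorm_sq_sub_rNorm_sq_le {n : ℕ} (M B : Matrix (Fin n) (Fin n) ℝ) {r : ℕ}
    (hB : B.rank ≤ r) : frobNorm M ^ 2 - rNorm M r ^ 2 ≤ frobNorm (M - B) ^ 2 := by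
  obtain ⟨V, hV, hBV⟩ := exists_transpose_mul_eq_one_and_mul_eq_zero B (m := n - r)
    (by have := rank_le_width B; simp only [Fintype.card_fin]; omega)
  obtain ⟨W, hW, htrace⟩ := exists_trace_gram_mul_eq M V
  rw [hV] at hW
  set τ := svPerm M
  have hc : ∑ k, (W * Wᵀ) (τ k) (τ k) = (n - r : ℕ) := by
    rw [Equiv.sum_comp τ (fun i => (W * Wᵀ) i i)]
    simpa only [trace, diag_apply, Fintype.card_fin] using trace_mul_transpose hW
  calc frobNorm M ^ 2 - rNorm M r ^ 2
      = ∑ k : Fin n with r ≤ k.val, gramEigenvalues M (τ k) := by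
        rw [frobNorm_sq_eq_sum_gramEigenvalues, rNorm_sq, ← Equiv.sum_comp τ,
          ← Finset.sum_filter_add_sum_filter_not univ (fun k : Fin n => k.val < r)]
        simp only [not_lt]
        exact add_sub_cancel_left _ _
    _ ≤ ∑ k, gramEigenvalues M (τ k) * (W * Wᵀ) (τ k) (τ k) :=
        sum_le_sum_mul_of_antitone (antitone_gramEigenvalues_comp_svPerm M)
          (fun _ => diag_mul_transpose_nonneg W _) (fun _ => diag_mul_transpose_le_one hW _) hc
    _ = ((M * V)ᵀ * (M * V)).trace := by
        rw [htrace, Equiv.sum_comp τ (fun i => gramEigenvalues M i * (W * Wᵀ) i i)]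
    _ = (((M - B) * V)ᵀ * ((M - B) * V)).trace := by rw [Matrix.sub_mul, hBV, sub_zero]
    _ ≤ ((M - B)ᵀ * (M - B)).trace := trace_transpose_mul_self_mul_le hV (M - B)
    _ = frobNorm (M - B) ^ 2 := (frobNorm_sq_eq_trace _).symm

theorem stmt3_general {n r : ℕ}
    (Sg : Matrix (Fin n) (Fin n) ℝ)
    (Ωs Λs : Matrix (Fin n) (Fin n) ℝ)
    -- `Ωs` is primal feasible:
    (hSOd : (Sg - Ωs).IsDiag)
    -- `Λs` is dual feasible:
    (hΛ0 : ∀ i, Λs i i = 0)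
    -- zero duality gap: the optimal values coincide:
    (hgap : (frobNorm (Sg - Ωs)) ^ 2 =
      -(rNorm (Sg + Λs) r) ^ 2 + 2 * minner Λs Sg + (frobNorm Sg) ^ 2) :
    ∀ B : Matrix (Fin n) (Fin n) ℝ, B.rank ≤ r →
      frobNorm ((Sg + Λs) - Ωs) ≤ frobNorm ((Sg + Λs) - B) := by
  intro B hB
  have hsplit : frobNorm (Sg + Λs - Ωs) ^ 2 = frobNorm (Sg - Ωs) ^ 2 + frobNorm Λs ^ 2 := by
    rw [show Sg + Λs - Ωs = (Sg - Ωs) + Λs by abel, frobNorm_add_sq,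
      minner_eq_zero_of_isDiag hSOd hΛ0]
    ring
  have hexpand := frobNorm_add_sq Sg Λs
  rw [minner_comm] at hexpand
  have hEY := frobNorm_sq_sub_rNorm_sq_le (Sg + Λs) B hB
  rw [← pow_le_pow_iff_left₀ (frobNorm_nonneg _) (frobNorm_nonneg _) two_ne_zero]
  linarith

/-- If the primal and dual optimal values coincide, `Ωs` attains the
primal minimum and `Λs` attains the dual maximum, then `Ωs` is a best
rank-at-most-`r` Frobenius approximation of `Sg + Λs`. -/
theorem stmt3 {n r : ℕ} (hr1 : 1 ≤ r) (hrn : r ≤ n)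
    (Sg : Matrix (Fin n) (Fin n) ℝ) (hSg : Sg.PosDef)
    (Ωs Λs : Matrix (Fin n) (Fin n) ℝ)
    -- `Ωs` is primal feasible:
    (hΩr : Ωs.rank ≤ r) (hΩpsd : Ωs.PosSemidef)
    (hSO : (Sg - Ωs).PosSemidef) (hSOd : (Sg - Ωs).IsDiag)
    -- `Λs` is dual feasible:
    (hΛsym : Λs.IsSymm) (hΛ0 : ∀ i, Λs i i = 0)
    -- `Ωs` attains the primal minimum:
    (hΩopt : ∀ Ω : Matrix (Fin n) (Fin n) ℝ, Ω.rank ≤ r → Ω.PosSemidef →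
      (Sg - Ω).PosSemidef → (Sg - Ω).IsDiag →
      (frobNorm (Sg - Ωs)) ^ 2 ≤ (frobNorm (Sg - Ω)) ^ 2)
    -- `Λs` attains the dual maximum:
    (hΛopt : ∀ Λ : Matrix (Fin n) (Fin n) ℝ, Λ.IsSymm → (∀ i, Λ i i = 0) →
      -(rNorm (Sg + Λ) r) ^ 2 + 2 * minner Λ Sg + (frobNorm Sg) ^ 2 ≤
        -(rNorm (Sg + Λs) r) ^ 2 + 2 * minner Λs Sg + (frobNorm Sg) ^ 2)
    -- zero duality gap: the optimal values coincide:
    (hgap : (frobNorm (Sg - Ωs)) ^ 2 =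
      -(rNorm (Sg + Λs) r) ^ 2 + 2 * minner Λs Sg + (frobNorm Sg) ^ 2) :
    ∀ B : Matrix (Fin n) (Fin n) ℝ, B.rank ≤ r →
      frobNorm ((Sg + Λs) - Ωs) ≤ frobNorm ((Sg + Λs) - B) :=
  stmt3_general Sg Ωs Λs hSOd hΛ0 hgap
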